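/- Suppose either m > 0, or m = 0 and α ∈ (1, 2). Then for every Lipschitz function u : ℝᵈ → ℝ the function y ↦ Ψ(m^{1/α}‖y‖) · min(1, ‖y‖^{−(d+α)}) · |u(y)| belongs to L¹(ℝᵈ) with respect to Lebesgue measure. -/

import Mathlib

open MeasureTheory

/-- `I(r) = ∫₀^∞ s^{(d+α)/2 − 1} e^{−s/4 − r²/s} ds`. -/
noncomputable def Ifun (d : ℕ) (α : ℝ) (r : ℝ) : ℝ :=
  ∫ s in Set.Ioi (0 : ℝ), s ^ (((d : ℝ) + α) / 2 - 1) * Real.exp (-(s / 4) - r ^ 2 / s)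

/-- `Ψ(r) = I(r)/I(0)`. -/
noncomputable def Psi (d : ℕ) (α : ℝ) (r : ℝ) : ℝ := Ifun d α r / Ifun d α 0

/-!
Since `r / 2 ≤ s / 8 + r² / s` (complete the square in `s - 2r`), comparing integrands gives
`Ψ(r) ≤ C e^{-r/2}`, and a Lipschitz `u` grows at most linearly. The integrand is therefore
dominated by a multiple of `e^{-c‖y‖/2} min(1, ‖y‖^{-(d+α)}) (1 + ‖y‖)` with `c = m^{1/α}`,
which is `O((1 + ‖y‖)^{-β})` for some `β > d`: for `m > 0` because of the exponential factor,
for `m = 0` because `min(1, t^{-(d+α)}) ≤ 2^{d+α} (1 + t)^{-(d+α)}` and `α > 1`.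
-/

open Real Set Filter
open scoped Nat NNReal

lemma integrableOn_rpow_mul_exp_neg_mul {q b : ℝ} (hq : -1 < q) (hb : 0 < b) :
    IntegrableOn (fun s : ℝ => s ^ q * exp (-(b * s))) (Ioi 0) := by
  simpa [rpow_one, neg_mul] using integrableOn_rpow_mul_exp_neg_mul_rpow hq one_pos hb

lemma half_le_div_eight_add_sq_div (r : ℝ) {s : ℝ} (hs : 0 < s) : r / 2 ≤ s / 8 + r ^ 2 / s := by
  rw [div_add_div _ _ (by norm_num) hs.ne', le_div_iff₀ (by positivity)]
  nlinarith [sq_nonneg (s - 2 * r)]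

lemma Ifun_nonneg (d : ℕ) (α r : ℝ) : 0 ≤ Ifun d α r :=
  setIntegral_nonneg measurableSet_Ioi fun s (hs : 0 < s) =>
    mul_nonneg (rpow_nonneg hs.le _) (exp_pos _).le

lemma measurable_Ifun (d : ℕ) (α : ℝ) : Measurable (Ifun d α) := by
  have : Measurable fun p : ℝ × ℝ =>
      p.2 ^ (((d : ℝ) + α) / 2 - 1) * exp (-(p.2 / 4) - p.1 ^ 2 / p.2) := by fun_prop
  exact this.stronglyMeasurable.integral_prod_right'.measurable

lemma Ifun_le_exp_mul {d : ℕ} {α : ℝ} (hdα : 0 < d + α) (r : ℝ) :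
    Ifun d α r ≤ exp (-(r / 2)) *
      ∫ s in Ioi (0 : ℝ), s ^ (((d : ℝ) + α) / 2 - 1) * exp (-(8⁻¹ * s)) := by
  rw [Ifun, ← integral_const_mul]
  refine integral_mono_of_nonneg ?_
    ((integrableOn_rpow_mul_exp_neg_mul (by linarith) (by norm_num)).const_mul _) ?_
  · filter_upwards [ae_restrict_mem measurableSet_Ioi] with s (hs : 0 < s)
    exact mul_nonneg (rpow_nonneg hs.le _) (exp_pos _).le
  · filter_upwards [ae_restrict_mem measurableSet_Ioi] with s (hs : 0 < s)
    rw [mul_left_comm, ← exp_add]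
    have := half_le_div_eight_add_sq_div r hs
    gcongr
    linarith

lemma Psi_nonneg (d : ℕ) (α r : ℝ) : 0 ≤ Psi d α r :=
  div_nonneg (Ifun_nonneg d α r) (Ifun_nonneg d α 0)

lemma exists_Psi_le_mul_exp {d : ℕ} {α : ℝ} (hdα : 0 < d + α) :
    ∃ C, 0 ≤ C ∧ ∀ r, Psi d α r ≤ C * exp (-(r / 2)) := by
  refine ⟨(∫ s in Ioi (0 : ℝ), s ^ (((d : ℝ) + α) / 2 - 1) * exp (-(8⁻¹ * s))) / Ifun d α 0,
    div_nonneg (setIntegral_nonneg measurableSet_Ioi fun s (hs : 0 < s) =>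
      mul_nonneg (rpow_nonneg hs.le _) (exp_pos _).le)
      (Ifun_nonneg d α 0), fun r => ?_⟩
  rw [div_mul_eq_mul_div, mul_comm]
  exact div_le_div_of_nonneg_right (Ifun_le_exp_mul hdα r) (Ifun_nonneg d α 0)

lemma min_one_rpow_neg_le {γ t : ℝ} (hγ : 0 ≤ γ) (ht : 0 ≤ t) :
    min 1 (t ^ (-γ)) ≤ 2 ^ γ * (1 + t) ^ (-γ) := by
  have hrhs : 2 ^ γ * (1 + t) ^ (-γ) = (2 / (1 + t)) ^ γ := by
    rw [rpow_neg (by positivity), div_rpow (by norm_num) (by positivity), div_eq_mul_inv]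
  rw [hrhs]
  rcases le_total t 1 with h | h
  · exact (min_le_left _ _).trans
      (one_le_rpow ((one_le_div (by positivity)).2 (by linarith)) hγ)
  · rw [rpow_neg ht, ← inv_rpow ht]
    refine (min_le_right _ _).trans (rpow_le_rpow (by positivity) ?_ hγ)
    rw [inv_eq_one_div, div_le_div_iff₀ (by positivity) (by positivity)]
    linarith

lemma exp_neg_mul_le_mul_one_add_rpow_neg (n : ℕ) {c t : ℝ} (hc : 0 < c) (ht : 0 ≤ t) :
    exp (-(c * t)) ≤ exp c * n ! / c ^ n * (1 + t) ^ (-(n : ℝ)) := by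
  have hpow := pow_div_factorial_le_exp (x := c * (1 + t)) (by positivity) n
  rw [div_le_iff₀ (by positivity)] at hpow
  have hrhs : exp c * n ! / c ^ n * (1 + t) ^ (-(n : ℝ)) = exp c * n ! / (c * (1 + t)) ^ n := by
    rw [rpow_neg (by positivity), rpow_natCast, mul_pow]
    field_simp
  rw [hrhs, le_div_iff₀ (by positivity)]
  calc exp (-(c * t)) * (c * (1 + t)) ^ n ≤ exp (-(c * t)) * (exp (c * (1 + t)) * n !) := by
        gcongr
    _ = exp c * n ! := by
        rw [← mul_assoc, ← exp_add]
        ring_nf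

lemma LipschitzWith.abs_le_mul_one_add_norm {E : Type*} [SeminormedAddCommGroup E]
    {u : E → ℝ} {K : ℝ≥0} (hu : LipschitzWith K u) (y : E) :
    |u y| ≤ (|u 0| + K) * (1 + ‖y‖) := by
  have hdist := hu.dist_le_mul y 0
  rw [Real.dist_eq, dist_zero_right] at hdist
  nlinarith [abs_sub_abs_le_abs_sub (u y) (u 0), abs_nonneg (u 0), norm_nonneg y, K.2]

lemma exists_exp_mul_min_rpow_neg_le {d : ℕ} {α m : ℝ} (hcase : 0 < m ∨ (m = 0 ∧ 1 < α)) :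
    ∃ β : ℝ, (d : ℝ) < β ∧ ∃ M : ℝ, ∀ t : ℝ, 0 ≤ t →
      exp (-(m ^ (1 / α) * t / 2)) * min 1 (t ^ (-((d : ℝ) + α))) * (1 + t) ≤
        M * (1 + t) ^ (-β) := by
  rcases hcase with hm | ⟨rfl, hα⟩
  · set c := m ^ (1 / α) / 2
    have hc : 0 < c := by positivity
    refine ⟨d + 1, by linarith, exp c * (d + 2)! / c ^ (d + 2), fun t ht => ?_⟩
    calc exp (-(m ^ (1 / α) * t / 2)) * min 1 (t ^ (-((d : ℝ) + α))) * (1 + t)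
        ≤ exp (-(c * t)) * 1 * (1 + t) := by
          rw [show m ^ (1 / α) * t / 2 = c * t by ring]
          gcongr
          exact min_le_left _ _
      _ ≤ exp c * (d + 2)! / c ^ (d + 2) * (1 + t) ^ (-((d + 2 : ℕ) : ℝ)) * (1 + t) := by
          rw [mul_one]
          gcongr
          exact exp_neg_mul_le_mul_one_add_rpow_neg (d + 2) hc ht
      _ = exp c * (d + 2)! / c ^ (d + 2) * (1 + t) ^ (-((d : ℝ) + 1)) := by
          rw [mul_assoc, ← rpow_add_one (by positivity)]
          push_cast
          ring_nf
  · refine ⟨d + α - 1, by linarith, 2 ^ ((d : ℝ) + α), fun t ht => ?_⟩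
    rw [zero_rpow (by positivity), zero_mul, zero_div, neg_zero, exp_zero, one_mul]
    calc min 1 (t ^ (-((d : ℝ) + α))) * (1 + t)
        ≤ 2 ^ ((d : ℝ) + α) * (1 + t) ^ (-((d : ℝ) + α)) * (1 + t) := by
          gcongr
          exact min_one_rpow_neg_le (by positivity) ht
      _ = 2 ^ ((d : ℝ) + α) * (1 + t) ^ (-(d + α - 1)) := by
          rw [mul_assoc, ← rpow_add_one (by positivity)]
          ring_nf

theorem stmt_16_general (d : ℕ) (α : ℝ) (hα : 0 < α)
    (m : ℝ) (hcase : 0 < m ∨ (m = 0 ∧ 1 < α))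
    (u : EuclideanSpace ℝ (Fin d) → ℝ) (K : NNReal) (hu : LipschitzWith K u) :
    Integrable (fun y : EuclideanSpace ℝ (Fin d) =>
      Psi d α (m ^ (1 / α) * ‖y‖) * min 1 (‖y‖ ^ (-((d : ℝ) + α))) * |u y|) volume := by
  obtain ⟨C, hC0, hC⟩ := exists_Psi_le_mul_exp (d := d) (α := α) (by positivity)
  obtain ⟨β, hβ, M, hM⟩ := exists_exp_mul_min_rpow_neg_le (d := d) hcase
  have hmeas : Measurable fun y : EuclideanSpace ℝ (Fin d) =>
      Psi d α (m ^ (1 / α) * ‖y‖) * min 1 (‖y‖ ^ (-((d : ℝ) + α))) * |u y| :=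
    ((((measurable_Ifun d α).comp (by fun_prop)).div_const _).mul (by fun_prop)).mul
      hu.continuous.abs.measurable
  refine ((integrable_one_add_norm (by simpa using hβ)).const_mul (C * (|u 0| + K) * M)).mono'
    hmeas.aestronglyMeasurable (Eventually.of_forall fun y => ?_)
  have hmin : 0 ≤ min 1 (‖y‖ ^ (-((d : ℝ) + α))) := le_min zero_le_one (by positivity)
  rw [norm_of_nonneg (mul_nonneg (mul_nonneg (Psi_nonneg d α _) hmin) (abs_nonneg _))]
  calc Psi d α (m ^ (1 / α) * ‖y‖) * min 1 (‖y‖ ^ (-((d : ℝ) + α))) * |u y|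
      ≤ C * exp (-(m ^ (1 / α) * ‖y‖ / 2)) * min 1 (‖y‖ ^ (-((d : ℝ) + α))) *
          ((|u 0| + K) * (1 + ‖y‖)) := by
        gcongr
        · exact hC _
        · exact hu.abs_le_mul_one_add_norm y
    _ = C * (|u 0| + K) *
          (exp (-(m ^ (1 / α) * ‖y‖ / 2)) * min 1 (‖y‖ ^ (-((d : ℝ) + α))) * (1 + ‖y‖)) := by
        ring
    _ ≤ C * (|u 0| + K) * (M * (1 + ‖y‖) ^ (-β)) :=
        mul_le_mul_of_nonneg_left (hM _ (norm_nonneg y)) (by positivity)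
    _ = C * (|u 0| + K) * M * (1 + ‖y‖) ^ (-β) := by ring

/-- Suppose either `m > 0`, or `m = 0` together with `α ∈ (1,2)`.
Then for every Lipschitz `u : ℝᵈ → ℝ`, the function
`y ↦ Ψ(m^{1/α}‖y‖) · min(1, ‖y‖^{−(d+α)}) · |u(y)|` is in `L¹(ℝᵈ)`. -/
theorem stmt_16 (d : ℕ) (hd : 1 ≤ d) (α : ℝ) (hα : 0 < α) (hα2 : α < 2)
    (m : ℝ) (hm : 0 ≤ m) (hcase : 0 < m ∨ (m = 0 ∧ 1 < α))
    (u : EuclideanSpace ℝ (Fin d) → ℝ) (K : NNReal) (hu : LipschitzWith K u) :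
    Integrable (fun y : EuclideanSpace ℝ (Fin d) =>
      Psi d α (m ^ (1 / α) * ‖y‖) * min 1 (‖y‖ ^ (-((d : ℝ) + α))) * |u y|) volume :=
  stmt_16_general d α hα m hcase u K hu
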